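/- arXiv:2112.04166 — 2 statements merged into one kernel-verified Lean document; each statement's English description precedes it below -/
import Mathlib

section
/- Every OEF1 allocation is 1/n-NMMS. -/
/-! Put agent `i` at position `p` of the OEF1 order. The `p + 1` agents up to `i` are at least as
heavy as `i`, so `w_i / w_N ≤ 1 / (p + 1)`. Agent `i` envies only the `p` earlier agents, each up
to one item; removing this set `T` of at most `p` items leaves value at most `n · u_i(A_i)`. In any
partition into `n` bundles at most `p` bundles meet `T`, so the other `n - p` bundles lie in
`M \ T`, whence `MMS_i ≤ n / (n - p) · u_i(A_i) ≤ (p + 1) · u_i(A_i)`. -/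

open Finset

/-- An allocation: a partition of the item set `Fin m` into `n` (possibly empty) bundles. -/
def IsAllocation {n m : ℕ} (A : Fin n → Finset (Fin m)) : Prop :=
  (∀ i j : Fin n, i ≠ j → Disjoint (A i) (A j)) ∧
    Finset.univ.biUnion A = (Finset.univ : Finset (Fin m))

/-- Additive utility of agent `i` for a bundle `S`. -/
def util {n m : ℕ} (u : Fin n → Fin m → ℝ) (i : Fin n) (S : Finset (Fin m)) : ℝ :=
  ∑ g ∈ S, u i g

/-- Weighted envy-freeness up to (x, y)-fraction of one item. -/
def WEF {n m : ℕ} (w : Fin n → ℝ) (u : Fin n → Fin m → ℝ) (A : Fin n → Finset (Fin m))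
    (x y : ℝ) : Prop :=
  ∀ i j : Fin n, ∃ B : Finset (Fin m), B ⊆ A j ∧ B.card ≤ 1 ∧
    (util u i (A i) + y * util u i B) / w i ≥ (util u i (A j) - x * util u i B) / w j

/-- Weighted proportionality up to (x, y)-fraction of one item. -/
def WPROP {n m : ℕ} (w : Fin n → ℝ) (u : Fin n → Fin m → ℝ) (A : Fin n → Finset (Fin m))
    (x y : ℝ) : Prop :=
  ∀ i : Fin n, ∃ B : Finset (Fin m), B ⊆ Finset.univ \ A i ∧ B.card ≤ 1 ∧
    (util u i (A i) + y * util u i B) / w i ≥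
      (util u i Finset.univ - (n : ℝ) * x * util u i B) / (∑ j, w j)

/-- The stronger notion WPROP*(x,y). -/
def WPROPstar {n m : ℕ} (w : Fin n → ℝ) (u : Fin n → Fin m → ℝ) (A : Fin n → Finset (Fin m))
    (x y : ℝ) : Prop :=
  ∀ i : Fin n, ∃ B : Finset (Fin m), B ⊆ Finset.univ \ A i ∧ B.card ≤ 1 ∧
    ∃ Bf : Fin n → Finset (Fin m),
      (∀ j : Fin n, j ≠ i → Bf j ⊆ A j ∧ (Bf j).card ≤ 1) ∧
      (util u i (A i) + y * util u i B) / w i ≥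
        (util u i Finset.univ - x * ∑ j ∈ Finset.univ.erase i, util u i (Bf j)) / (∑ j, w j)

/-- The (1-out-of-n) maximin share of agent `i`. -/
noncomputable def MMS {n m : ℕ} (u : Fin n → Fin m → ℝ) (i : Fin n) : ℝ :=
  sSup {v : ℝ | ∃ Z : Fin n → Finset (Fin m), IsAllocation Z ∧ v = ⨅ j, util u i (Z j)}

/-- The normalized maximin share of agent `i`. -/
noncomputable def NMMS {n m : ℕ} (w : Fin n → ℝ) (u : Fin n → Fin m → ℝ) (i : Fin n) : ℝ :=
  (w i / ∑ j, w j) * (n : ℝ) * MMS u i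

/-- The weighted maximin share of agent `i`. -/
noncomputable def WMMS {n m : ℕ} (w : Fin n → ℝ) (u : Fin n → Fin m → ℝ) (i : Fin n) : ℝ :=
  w i * sSup {v : ℝ | ∃ Z : Fin n → Finset (Fin m), IsAllocation Z ∧
    v = ⨅ j, util u i (Z j) / w j}

/-- Ordered-EF1: EF1 disregarding weights, and the agents can be renumbered so that
weights are nonincreasing and no agent envies a later agent. -/
def OEF1 {n m : ℕ} (w : Fin n → ℝ) (u : Fin n → Fin m → ℝ)
    (A : Fin n → Finset (Fin m)) : Prop :=
  (∀ i j : Fin n, ∃ B : Finset (Fin m), B ⊆ A j ∧ B.card ≤ 1 ∧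
      util u i (A i) ≥ util u i (A j) - util u i B) ∧
  ∃ σ : Equiv.Perm (Fin n),
    (∀ i j : Fin n, i ≤ j → w (σ j) ≤ w (σ i)) ∧
    (∀ i j : Fin n, i < j → util u (σ i) (A (σ i)) ≥ util u (σ i) (A (σ j)))

open Function

section Util

variable {n m : ℕ} {u : Fin n → Fin m → ℝ} {i : Fin n}

lemma util_nonneg (hu : ∀ g, 0 ≤ u i g) (S : Finset (Fin m)) : 0 ≤ util u i S :=
  sum_nonneg fun g _ => hu g

lemma util_mono (hu : ∀ g, 0 ≤ u i g) {S S' : Finset (Fin m)} (h : S ⊆ S') :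
    util u i S ≤ util u i S' :=
  sum_le_sum_of_subset_of_nonneg h fun g _ _ => hu g

lemma util_sdiff {B S : Finset (Fin m)} (h : B ⊆ S) :
    util u i (S \ B) = util u i S - util u i B :=
  sum_sdiff_eq_sub h

lemma IsAllocation.util_eq_sum_inter {Z : Fin n → Finset (Fin m)} (hZ : IsAllocation Z)
    (S : Finset (Fin m)) : util u i S = ∑ k, util u i (Z k ∩ S) := by
  have hcover : univ.biUnion (fun k => Z k ∩ S) = S := by
    rw [← biUnion_inter, hZ.2, univ_inter]
  conv_lhs => rw [← hcover]
  exact sum_biUnion fun j _ k _ hjk => (hZ.1 j k hjk).mono inter_subset_left inter_subset_left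

end Util

lemma card_filter_not_disjoint_le {ι α : Type*} [Fintype ι] [DecidableEq α] {Z : ι → Finset α}
    (hZ : Pairwise (Disjoint on Z)) (T : Finset α) :
    #{k | ¬Disjoint (Z k) T} ≤ #T := by
  refine (card_le_card_biUnion (f := fun k => Z k ∩ T) ?_ ?_).trans (card_le_card ?_)
  · exact fun j _ k _ hjk => (hZ hjk).mono inter_subset_left inter_subset_left
  · intro k hk
    exact not_disjoint_iff_nonempty_inter.mp (mem_filter.mp hk).2
  · exact biUnion_subset.mpr fun k _ => inter_subset_right

section Shares

variable {n m : ℕ} {u : Fin n → Fin m → ℝ} {i : Fin n}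

lemma IsAllocation.sub_card_mul_iInf_le {Z : Fin n → Finset (Fin m)} (hu : ∀ g, 0 ≤ u i g)
    (hZ : IsAllocation Z) (T : Finset (Fin m)) :
    ((n : ℝ) - #T) * ⨅ k, util u i (Z k) ≤ util u i (univ \ T) := by
  set C : Finset (Fin n) := {k | Disjoint (Z k) T}
  have hC : (n : ℝ) - #T ≤ #C := by
    have hsplit : #C + #{k | ¬Disjoint (Z k) T} = n := by
      rw [card_filter_add_card_filter_not, card_univ, Fintype.card_fin]
    have hmeet := card_filter_not_disjoint_le hZ.1 T
    rw [sub_le_iff_le_add]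
    exact_mod_cast (by omega : n ≤ #C + #T)
  calc ((n : ℝ) - #T) * ⨅ k, util u i (Z k)
      ≤ #C * ⨅ k, util u i (Z k) :=
        mul_le_mul_of_nonneg_right hC (Real.iInf_nonneg fun k => util_nonneg hu _)
    _ = ∑ k ∈ C, ⨅ k, util u i (Z k) := by rw [sum_const, nsmul_eq_mul]
    _ ≤ ∑ k ∈ C, util u i (Z k ∩ (univ \ T)) := sum_le_sum fun k hk => by
        rw [← inter_sdiff_assoc, inter_univ, sdiff_eq_self_of_disjoint (mem_filter.mp hk).2]
        exact ciInf_le (Set.finite_range _).bddBelow k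
    _ ≤ ∑ k, util u i (Z k ∩ (univ \ T)) :=
        sum_le_sum_of_subset_of_nonneg (subset_univ _) fun k _ _ => util_nonneg hu _
    _ = util u i (univ \ T) := (hZ.util_eq_sum_inter _).symm

lemma MMS_le_of_util_compl_le (hu : ∀ g, 0 ≤ u i g) {T : Finset (Fin m)} {a : ℝ} {p : ℕ}
    (hp : p < n) (hT : #T ≤ p) (hTa : util u i (univ \ T) ≤ n * a) (ha : 0 ≤ a) :
    MMS u i ≤ (p + 1) * a := by
  refine Real.sSup_le ?_ (by positivity)
  rintro _ ⟨Z, hZ, rfl⟩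
  have hL := Real.iInf_nonneg fun k => util_nonneg hu (Z k)
  have hZT := hZ.sub_card_mul_iInf_le hu T
  have hT' : (#T : ℝ) ≤ p := by exact_mod_cast hT
  have hp' : (p : ℝ) + 1 ≤ n := by exact_mod_cast hp
  set L := ⨅ k, util u i (Z k)
  have hpL : ((n : ℝ) - p) * L ≤ n * a :=
    (mul_le_mul_of_nonneg_right (by linarith) hL).trans (hZT.trans hTa)
  have hnL : (n : ℝ) * L ≤ n * ((p + 1) * a) := by
    have hgap : 0 ≤ (p : ℝ) * (n - p - 1) * L := by
      have : (0 : ℝ) ≤ n - p - 1 := by linarith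
      positivity
    calc (n : ℝ) * L ≤ (p + 1) * ((n - p) * L) := by linarith
      _ ≤ (p + 1) * (n * a) := by gcongr
      _ = n * ((p + 1) * a) := by ring
  exact le_of_mul_le_mul_left hnL (by linarith)

lemma IsAllocation.exists_util_compl_le {A : Fin n → Finset (Fin m)} (hu : ∀ g, 0 ≤ u i g)
    (hA : IsAllocation A) {E : Finset (Fin n)}
    (hEF1 : ∀ k ∈ E, ∃ B, B ⊆ A k ∧ #B ≤ 1 ∧ util u i (A i) ≥ util u i (A k) - util u i B)
    (hEF : ∀ k ∉ E, util u i (A k) ≤ util u i (A i)) :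
    ∃ T : Finset (Fin m), #T ≤ #E ∧ util u i (univ \ T) ≤ n * util u i (A i) := by
  choose! B hBA hBcard hB using hEF1
  refine ⟨E.biUnion B, ?_, ?_⟩
  · calc #(E.biUnion B) ≤ ∑ k ∈ E, #(B k) := card_biUnion_le
      _ ≤ ∑ k ∈ E, 1 := sum_le_sum hBcard
      _ = #E := (card_eq_sum_ones E).symm
  rw [hA.util_eq_sum_inter]
  calc ∑ k, util u i (A k ∩ (univ \ E.biUnion B)) ≤ ∑ _k : Fin n, util u i (A i) :=
        sum_le_sum fun k _ => ?_
    _ = n * util u i (A i) := by rw [sum_const, card_univ, Fintype.card_fin, nsmul_eq_mul]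
  by_cases hk : k ∈ E
  · have hsub : A k ∩ (univ \ E.biUnion B) ⊆ A k \ B k := by
      intro g hg
      simp only [mem_inter, mem_sdiff, mem_biUnion, mem_univ, true_and, not_exists,
        not_and] at hg ⊢
      exact ⟨hg.1, hg.2 k hk⟩
    calc util u i (A k ∩ (univ \ E.biUnion B)) ≤ util u i (A k \ B k) := util_mono hu hsub
      _ = util u i (A k) - util u i (B k) := util_sdiff (hBA k hk)
      _ ≤ util u i (A i) := hB k hk
  · exact (util_mono hu inter_subset_left).trans (hEF k hk)

end Shares

lemma card_add_one_mul_le_sum {ι : Type*} [Fintype ι] [DecidableEq ι] {w : ι → ℝ}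
    (hw : ∀ k, 0 ≤ w k) {i : ι} {E : Finset ι} (hiE : i ∉ E) (hE : ∀ k ∈ E, w i ≤ w k) :
    (#E + 1) * w i ≤ ∑ k, w k := by
  have hle : #(insert i E) • w i ≤ ∑ k ∈ insert i E, w k :=
    card_nsmul_le_sum _ _ _ fun k hk => (mem_insert.mp hk).elim (fun h => h ▸ le_rfl) (hE k)
  rw [card_insert_of_notMem hiE, nsmul_eq_mul, Nat.cast_succ] at hle
  exact hle.trans (sum_le_sum_of_subset_of_nonneg (subset_univ _) fun k _ _ => hw k)

lemma OEF1.exists_envied {n m : ℕ} {w : Fin n → ℝ} {u : Fin n → Fin m → ℝ}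
    {A : Fin n → Finset (Fin m)} (hOEF1 : OEF1 w u A) (i : Fin n) :
    ∃ E : Finset (Fin n), i ∉ E ∧ (∀ k ∈ E, w i ≤ w k) ∧
      ∀ k ∉ E, util u i (A k) ≤ util u i (A i) := by
  obtain ⟨-, σ, hw, hord⟩ := hOEF1
  refine ⟨(Iio (σ.symm i)).map σ.toEmbedding, ?_, ?_, ?_⟩
  · simp [mem_map_equiv]
  · intro k hk
    rw [mem_map_equiv, mem_Iio] at hk
    simpa using hw _ _ hk.le
  · intro k hk
    rw [mem_map_equiv, mem_Iio, not_lt] at hk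
    rcases hk.eq_or_lt with hki | hik
    · rw [σ.symm.injective hki]
    · simpa using hord _ _ hik

theorem oef1_implies_inv_n_nmms_general (n m : ℕ)
    (w : Fin n → ℝ) (hw : ∀ i, 0 < w i)
    (u : Fin n → Fin m → ℝ) (hu : ∀ i g, 0 ≤ u i g)
    (A : Fin n → Finset (Fin m)) (hA : IsAllocation A)
    (hOEF1 : OEF1 w u A) :
    ∀ i, util u i (A i) ≥ (1 / (n : ℝ)) * NMMS w u i := by
  intro i
  obtain ⟨E, hiE, hEw, hEF⟩ := hOEF1.exists_envied i
  obtain ⟨T, hT, hTa⟩ := hA.exists_util_compl_le (hu i) (fun k _ => hOEF1.1 i k) hEF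
  have hMMS : MMS u i ≤ (#E + 1) * util u i (A i) :=
    MMS_le_of_util_compl_le (hu i) ((card_lt_univ_of_notMem hiE).trans_eq (Fintype.card_fin n))
      hT hTa (util_nonneg (hu i) _)
  have hW := card_add_one_mul_le_sum (fun k => (hw k).le) hiE hEw
  have hWpos : 0 < ∑ k, w k := (mul_pos (by positivity) (hw i)).trans_le hW
  have hn : (n : ℝ) ≠ 0 := by exact_mod_cast i.pos.ne'
  calc 1 / (n : ℝ) * NMMS w u i = w i / (∑ k, w k) * MMS u i := by
        rw [NMMS]; field_simp
    _ ≤ w i / (∑ k, w k) * ((#E + 1) * util u i (A i)) := by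
        gcongr; exact div_nonneg (hw i).le hWpos.le
    _ = (#E + 1) * w i / (∑ k, w k) * util u i (A i) := by ring
    _ ≤ util u i (A i) := mul_le_of_le_one_left (util_nonneg (hu i) _) ((div_le_one hWpos).mpr hW)

/-- Every OEF1 allocation is 1/n-NMMS. -/
theorem oef1_implies_inv_n_nmms (n m : ℕ) (hn : 2 ≤ n)
    (w : Fin n → ℝ) (hw : ∀ i, 0 < w i)
    (u : Fin n → Fin m → ℝ) (hu : ∀ i g, 0 ≤ u i g)
    (A : Fin n → Finset (Fin m)) (hA : IsAllocation A)
    (hOEF1 : OEF1 w u A) :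
    ∀ i, util u i (A i) ≥ (1 / (n : ℝ)) * NMMS w u i :=
  oef1_implies_inv_n_nmms_general n m w hw u hu A hA hOEF1
end

section
/- In an instance in which all items are identical, every allocation satisfying WEF(0,1) satisfies lower quota, i.e., |A_i| ≥ ⌊q_i⌋ for every agent i. -/
open Finset

/-!
With identical items, WEF(0,1) says `|A_j| / w_j ≤ (|A_i| + 1) / w_i` for every `j`, with strict
inequality at `j = i`. Summing `|A_j| ≤ c · w_j` for `c = (|A_i| + 1) / w_i` over all agents gives
`m < c · w_N`, i.e. `q_i < |A_i| + 1`, which is lower quota.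
-/

theorem util_const_one {n m : ℕ} (i : Fin n) (S : Finset (Fin m)) :
    util (fun _ _ => (1 : ℝ)) i S = S.card := by
  simp [util]

theorem IsAllocation.sum_card {n m : ℕ} {A : Fin n → Finset (Fin m)} (hA : IsAllocation A) :
    ∑ j, (A j).card = m := by
  rw [← card_biUnion fun x _ y _ hxy => hA.1 x y hxy, hA.2, card_univ, Fintype.card_fin]

theorem WEF.card_div_le_card_add_one_div {n m : ℕ} {w : Fin n → ℝ} (hw : ∀ i, 0 < w i)
    {A : Fin n → Finset (Fin m)} (hWEF : WEF w (fun _ _ => (1 : ℝ)) A 0 1) (i j : Fin n) :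
    ((A j).card : ℝ) / w j ≤ ((A i).card + 1) / w i := by
  obtain ⟨B, -, hB, hineq⟩ := hWEF i j
  simp only [util_const_one, zero_mul, sub_zero, one_mul, ge_iff_le] at hineq
  calc ((A j).card : ℝ) / w j ≤ ((A i).card + B.card) / w i := hineq
    _ ≤ ((A i).card + 1) / w i := by
      gcongr
      · exact (hw i).le
      · exact_mod_cast hB

theorem mul_sum_lt_add_one_of_div_le {ι : Type*} [Fintype ι] {a w : ι → ℝ} (hw : ∀ j, 0 < w j)
    {i : ι} (ha : ∀ j, a j / w j ≤ (a i + 1) / w i) :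
    w i / (∑ j, w j) * ∑ j, a j < a i + 1 := by
  set c := (a i + 1) / w i
  have hci : c * w i = a i + 1 := div_mul_cancel₀ _ (hw i).ne'
  have hsum : ∑ j, a j < ∑ j, c * w j :=
    sum_lt_sum (fun j _ => (div_le_iff₀ (hw j)).mp (ha j)) ⟨i, mem_univ i, by linarith⟩
  have hW : 0 < ∑ j, w j := sum_pos (fun j _ => hw j) ⟨i, mem_univ i⟩
  calc w i / (∑ j, w j) * ∑ j, a j < w i / (∑ j, w j) * ∑ j, c * w j :=
        mul_lt_mul_of_pos_left hsum (div_pos (hw i) hW)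
    _ = a i + 1 := by rw [← mul_sum, ← hci]; field_simp

theorem wef01_lower_quota_general (n m : ℕ)
    (w : Fin n → ℝ) (hw : ∀ i, 0 < w i)
    (A : Fin n → Finset (Fin m)) (hA : IsAllocation A)
    (hWEF : WEF w (fun _ _ => (1 : ℝ)) A 0 1) :
    ∀ i : Fin n, ⌊(w i / ∑ j, w j) * (m : ℝ)⌋ ≤ ((A i).card : ℤ) := by
  intro i
  have hm : (m : ℝ) = ∑ j, ((A j).card : ℝ) := by exact_mod_cast hA.sum_card.symm
  rw [Int.floor_le_iff, hm]
  exact_mod_cast mul_sum_lt_add_one_of_div_le hw (hWEF.card_div_le_card_add_one_div hw i)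

/-- With identical items, every WEF(0,1) allocation satisfies lower quota. -/
theorem wef01_lower_quota (n m : ℕ) (hn : 2 ≤ n)
    (w : Fin n → ℝ) (hw : ∀ i, 0 < w i)
    (A : Fin n → Finset (Fin m)) (hA : IsAllocation A)
    (hWEF : WEF w (fun _ _ => (1 : ℝ)) A 0 1) :
    ∀ i : Fin n, ⌊(w i / ∑ j, w j) * (m : ℝ)⌋ ≤ ((A i).card : ℤ) :=
  wef01_lower_quota_general n m w hw A hA hWEF
end
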